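/- Let Q_P : Δ(S) × A → ℝ be bounded, convex in the belief, and satisfy Q_P = H_POMDP Q_P, and let Q_O : Δ(S) × A → ℝ be bounded with Q_O = H_OTIB Q_O. Then for every belief b ∈ Δ(S) and every a ∈ A: Q_P(b,a) ≤ Q_O(b,a) (soundness of the optimized tighter informed bound). -/

import Mathlib

open Finset
open scoped Classical

set_option linter.unusedSectionVars false

/-- A belief (probability distribution) over a finite state space `S`. -/
structure Belief (S : Type*) [Fintype S] where
  val : S → ℝ
  nonneg : ∀ s, 0 ≤ val s
  sum_one : ∑ s, val s = 1

/-- The convex combination `l • b₁ + (1-l) • b₂` of two beliefs. -/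
noncomputable def Belief.mix {S : Type*} [Fintype S] (b₁ b₂ : Belief S) (l : ℝ)
    (h0 : 0 ≤ l) (h1 : l ≤ 1) : Belief S where
  val s := l * b₁.val s + (1 - l) * b₂.val s
  nonneg s := add_nonneg (mul_nonneg h0 (b₁.nonneg s))
    (mul_nonneg (by linarith) (b₂.nonneg s))
  sum_one := by
    rw [Finset.sum_add_distrib, ← Finset.mul_sum, ← Finset.mul_sum, b₁.sum_one, b₂.sum_one]
    ring

/-- `Q : Δ(S) × A → ℝ` is convex in the belief. -/
def ConvexInBelief {S A : Type*} [Fintype S] (Q : Belief S → A → ℝ) : Prop :=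
  ∀ (a : A) (b₁ b₂ : Belief S) (l : ℝ) (h0 : 0 ≤ l) (h1 : l ≤ 1),
    Q (Belief.mix b₁ b₂ l h0 h1) a ≤ l * Q b₁ a + (1 - l) * Q b₂ a

/-- A finite POMDP: transition function `T s a s' = T(s'|s,a)`, observation function
`Z a s' o = Ω(o|a,s')`, rewards `R`, discount `γ ∈ (0,1)`. -/
structure POMDP (S A O : Type*) [Fintype S] [Fintype A] [Fintype O] where
  T : S → A → S → ℝ
  T_nonneg : ∀ s a s', 0 ≤ T s a s'
  T_sum_one : ∀ s a, ∑ s', T s a s' = 1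
  Z : A → S → O → ℝ
  Z_nonneg : ∀ a s' o, 0 ≤ Z a s' o
  Z_sum_one : ∀ a s', ∑ o, Z a s' o = 1
  R : S → A → ℝ
  γ : ℝ
  γ_pos : 0 < γ
  γ_lt_one : γ < 1

namespace POMDP

variable {S A O : Type*} [Fintype S] [Fintype A] [Fintype O] [Nonempty S] [Nonempty A]
  [Nonempty O]
variable (M : POMDP S A O)

/-- `Pr(s',o|s,a)` -/
def prSO (s : S) (a : A) (s' : S) (o : O) : ℝ := M.Z a s' o * M.T s a s'

lemma prSO_nonneg (s : S) (a : A) (s' : S) (o : O) : 0 ≤ M.prSO s a s' o :=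
  mul_nonneg (M.Z_nonneg a s' o) (M.T_nonneg s a s')

/-- `Pr(o|s,a)` -/
def prO (s : S) (a : A) (o : O) : ℝ := ∑ s', M.prSO s a s' o

/-- `Pr(s',o|b,a)` -/
def bprSO (b : Belief S) (a : A) (s' : S) (o : O) : ℝ := ∑ s, b.val s * M.prSO s a s' o

lemma bprSO_nonneg (b : Belief S) (a : A) (s' : S) (o : O) : 0 ≤ M.bprSO b a s' o :=
  Finset.sum_nonneg fun s _ => mul_nonneg (b.nonneg s) (M.prSO_nonneg s a s' o)

/-- `Pr(o|b,a)` -/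
def bprO (b : Belief S) (a : A) (o : O) : ℝ := ∑ s', M.bprSO b a s' o

/-- The unit belief `δ_s`. -/
noncomputable def unit (s : S) : Belief S where
  val s' := if s' = s then 1 else 0
  nonneg s' := by by_cases h : s' = s <;> simp [h]
  sum_one := by simp

/-- The posterior belief `b_{b,a,o}`, defined when `Pr(o|b,a) > 0`. -/
noncomputable def post (b : Belief S) (a : A) (o : O) (h : 0 < M.bprO b a o) : Belief S where
  val s' := M.bprSO b a s' o / M.bprO b a o
  nonneg s' := div_nonneg (M.bprSO_nonneg b a s' o) h.le
  sum_one := by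
    rw [← Finset.sum_div]
    exact div_self (ne_of_gt h)

/-- The one-step belief `b_{s,a,o} = b_{δ_s,a,o}`, defined when `Pr(o|s,a) > 0`. -/
noncomputable def osb (s : S) (a : A) (o : O) (h : 0 < M.prO s a o) : Belief S where
  val s' := M.prSO s a s' o / M.prO s a o
  nonneg s' := div_nonneg (M.prSO_nonneg s a s' o) h.le
  sum_one := by
    unfold prO
    rw [← Finset.sum_div]
    exact div_self (ne_of_gt h)

/-- Expected reward `R(b,a)`. -/
noncomputable def expR (b : Belief S) (a : A) : ℝ := ∑ s, b.val s * M.R s a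

/-- The fast informed bound operator `H_FIB`. -/
noncomputable def HFIB (Q : Belief S → A → ℝ) (b : Belief S) (a : A) : ℝ :=
  M.expR b a + M.γ * ∑ o, Finset.univ.sup' Finset.univ_nonempty
    (fun a' => ∑ s', M.bprSO b a s' o * Q (unit s') a')

/-- The tighter informed bound operator `H_TIB`. -/
noncomputable def HTIB (Q : Belief S → A → ℝ) (b : Belief S) (a : A) : ℝ :=
  M.expR b a + M.γ * ∑ o, Finset.univ.sup' Finset.univ_nonempty
    (fun a' => ∑ s, if h : 0 < M.prO s a o then
      b.val s * M.prO s a o * Q (M.osb s a o h) a' else 0)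

/-- The optimal Bellman operator `H_POMDP`. -/
noncomputable def HPOMDP (Q : Belief S → A → ℝ) (b : Belief S) (a : A) : ℝ :=
  M.expR b a + M.γ * ∑ o, if h : 0 < M.bprO b a o then
    M.bprO b a o * Finset.univ.sup' Finset.univ_nonempty (fun a' => Q (M.post b a o h) a')
  else 0

/-- Index type for the family `B_SAO`: `none` indexes the initial belief `b₀`,
`some (s,a,o)` (with `Pr(o|s,a) > 0`) indexes the one-step belief `b_{s,a,o}`. -/
abbrev OSIdx : Type _ := Option {x : S × A × O // 0 < M.prO x.1 x.2.1 x.2.2}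

/-- The member of the family `B_SAO` (with initial belief `b₀`) at a given index. -/
noncomputable def member (b₀ : Belief S) : M.OSIdx → Belief S
  | none => b₀
  | some x => M.osb x.1.1 x.1.2.1 x.1.2.2 x.2

/-- `w` is a weight function for the belief `tgt` over the family `B_SAO`. -/
def IsWeight (b₀ : Belief S) (tgt : Belief S) (w : M.OSIdx → ℝ) : Prop :=
  (∀ i, 0 ≤ w i) ∧ ∀ s, ∑ i, w i * (M.member b₀ i).val s = tgt.val s

/-- The optimized tighter informed bound operator `H_OTIB`. -/
noncomputable def HOTIB (b₀ : Belief S) (Q : Belief S → A → ℝ) (b : Belief S) (a : A) : ℝ :=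
  M.expR b a + M.γ * ∑ o, if h : 0 < M.bprO b a o then
    Finset.univ.sup' Finset.univ_nonempty (fun a' =>
      M.bprO b a o * ⨅ w : {w : M.OSIdx → ℝ // M.IsWeight b₀ (M.post b a o h) w},
        ∑ i, (w : M.OSIdx → ℝ) i * Q (M.member b₀ i) a')
  else 0

/-- The operator `H_ŵ` induced by a weight selection `W`. -/
noncomputable def Hsel (b₀ : Belief S)
    (W : ∀ (b : Belief S) (a : A) (o : O), 0 < M.bprO b a o → (M.OSIdx → ℝ))
    (Q : Belief S → A → ℝ) (b : Belief S) (a : A) : ℝ :=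
  M.expR b a + M.γ * ∑ o, if h : 0 < M.bprO b a o then
    Finset.univ.sup' Finset.univ_nonempty (fun a' =>
      M.bprO b a o * ∑ i, W b a o h i * Q (M.member b₀ i) a')
  else 0

end POMDP

/-!
Both `Q_P` and `Q_O` are bounded, so `Q_P - Q_O ≤ K` for some `K`. If `Q_P - Q_O ≤ c` everywhere,
then `H_POMDP Q_P - H_OTIB Q_O ≤ γ c`: for every weight function `w` of a posterior
`b_{b,a,o}` over `B_SAO`, convexity (Jensen) gives
`Q_P(b_{b,a,o}, a') ≤ ∑ w(b') Q_P(b', a') ≤ ∑ w(b') Q_O(b', a') + c`,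
and the weights `Pr(o|b,a)` add up to `1`. Iterating, `Q_P - Q_O ≤ γⁿ K → 0`.
-/

namespace Belief

variable {S : Type*} [Fintype S]

@[ext]
theorem ext {b₁ b₂ : Belief S} (h : b₁.val = b₂.val) : b₁ = b₂ := by
  cases b₁; cases b₂; cases h; rfl

theorem val_mem_stdSimplex (b : Belief S) : b.val ∈ stdSimplex ℝ S :=
  ⟨b.nonneg, b.sum_one⟩

def ofMemStdSimplex (x : S → ℝ) (hx : x ∈ stdSimplex ℝ S) : Belief S :=
  ⟨x, hx.1, hx.2⟩

theorem sum_weights_eq_one {ι : Type*} [Fintype ι] {f : ι → Belief S} {w : ι → ℝ}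
    {b : Belief S} (hb : ∀ s, ∑ i, w i * (f i).val s = b.val s) : ∑ i, w i = 1 := by
  calc ∑ i, w i = ∑ i, ∑ s, w i * (f i).val s := by simp [← Finset.mul_sum, (f _).sum_one]
    _ = ∑ s, b.val s := by rw [Finset.sum_comm]; simp only [hb]
    _ = 1 := b.sum_one

end Belief

section Jensen

variable {S A : Type*} [Fintype S]

/-- `Q (·) a` as a function on `S → ℝ`, with the junk value `0` off the standard simplex. -/
noncomputable def onStdSimplex (Q : Belief S → A → ℝ) (a : A) (x : S → ℝ) : ℝ :=
  if h : x ∈ stdSimplex ℝ S then Q (Belief.ofMemStdSimplex x h) a else 0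

theorem onStdSimplex_val (Q : Belief S → A → ℝ) (a : A) (b : Belief S) :
    onStdSimplex Q a b.val = Q b a := by
  rw [onStdSimplex, dif_pos b.val_mem_stdSimplex]
  rfl

theorem ConvexInBelief.convexOn {Q : Belief S → A → ℝ} (hQ : ConvexInBelief Q) (a : A) :
    ConvexOn ℝ (stdSimplex ℝ S) (onStdSimplex Q a) := by
  refine ⟨convex_stdSimplex ℝ S, fun x hx y hy p q hp hq hpq => ?_⟩
  obtain rfl : q = 1 - p := by linarith
  rw [onStdSimplex, dif_pos (convex_stdSimplex ℝ S hx hy hp hq hpq), onStdSimplex, dif_pos hx,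
    onStdSimplex, dif_pos hy]
  have hmix : Belief.ofMemStdSimplex (p • x + (1 - p) • y) (convex_stdSimplex ℝ S hx hy hp hq hpq)
      = (Belief.ofMemStdSimplex x hx).mix (.ofMemStdSimplex y hy) p hp (by linarith) := by
    ext s
    simp [Belief.mix, Belief.ofMemStdSimplex]
  rw [hmix, smul_eq_mul, smul_eq_mul]
  exact hQ a _ _ p hp _

theorem ConvexInBelief.le_sum_mul {Q : Belief S → A → ℝ} (hQ : ConvexInBelief Q)
    {ι : Type*} [Fintype ι] (f : ι → Belief S) {w : ι → ℝ} (hw : ∀ i, 0 ≤ w i)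
    {b : Belief S} (hb : ∀ s, ∑ i, w i * (f i).val s = b.val s) (a : A) :
    Q b a ≤ ∑ i, w i * Q (f i) a := by
  have hb' : b.val = ∑ i, w i • (f i).val := by
    ext s
    simp [Finset.sum_apply, hb]
  have := (hQ.convexOn a).map_sum_le (t := Finset.univ) (fun i _ => hw i)
    (Belief.sum_weights_eq_one hb) (fun i _ => (f i).val_mem_stdSimplex)
  simpa [← hb', onStdSimplex_val] using this

end Jensen

theorem nonpos_of_bddAbove_of_contracting {X : Type*} {D : X → ℝ} {γ : ℝ} (hγ₀ : 0 ≤ γ)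
    (hγ₁ : γ < 1) (hD : BddAbove (Set.range D))
    (hstep : ∀ c, (∀ x, D x ≤ c) → ∀ x, D x ≤ γ * c) (x : X) : D x ≤ 0 := by
  obtain ⟨K, hK⟩ := hD
  have hpow : ∀ n : ℕ, ∀ x, D x ≤ γ ^ n * K := by
    intro n
    induction n with
    | zero => simpa using fun x => hK ⟨x, rfl⟩
    | succ n ih => simpa [pow_succ', mul_assoc] using hstep _ ih
  have hlim := (tendsto_pow_atTop_nhds_zero_of_lt_one hγ₀ hγ₁).mul_const K
  rw [zero_mul] at hlim
  exact ge_of_tendsto' hlim fun n => hpow n x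

namespace POMDP

variable {S A O : Type*} [Fintype S] [Fintype A] [Fintype O] [Nonempty S] [Nonempty A]
  [Nonempty O] (M : POMDP S A O)

theorem prO_nonneg (s : S) (a : A) (o : O) : 0 ≤ M.prO s a o :=
  Finset.sum_nonneg fun s' _ => M.prSO_nonneg s a s' o

theorem bprO_nonneg (b : Belief S) (a : A) (o : O) : 0 ≤ M.bprO b a o :=
  Finset.sum_nonneg fun s' _ => M.bprSO_nonneg b a s' o

theorem sum_bprO (b : Belief S) (a : A) : ∑ o, M.bprO b a o = 1 := by
  calc ∑ o, M.bprO b a o = ∑ s, b.val s * ∑ s', M.T s a s' * ∑ o, M.Z a s' o := by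
        simp only [bprO, bprSO, prSO, Finset.mul_sum]
        rw [Finset.sum_comm]
        refine (Finset.sum_congr rfl fun _ _ => Finset.sum_comm).trans Finset.sum_comm |>.trans ?_
        simp only [mul_comm, mul_left_comm]
    _ = 1 := by simp [M.Z_sum_one, M.T_sum_one, b.sum_one]

theorem prO_mul_osb_val {s : S} {a : A} {o : O} (h : 0 < M.prO s a o) (s' : S) :
    M.prO s a o * (M.osb s a o h).val s' = M.prSO s a s' o :=
  mul_div_cancel₀ _ h.ne'

theorem prSO_eq_zero_of_not_pos {s : S} {a : A} {o : O} (h : ¬0 < M.prO s a o) (s' : S) :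
    M.prSO s a s' o = 0 :=
  (Finset.sum_eq_zero_iff_of_nonneg fun s' _ => M.prSO_nonneg s a s' o).1
    (le_antisymm (not_lt.1 h) (M.prO_nonneg s a o)) s' (Finset.mem_univ s')

/-- The posterior `b_{b,a,o}` is the mixture of the one-step beliefs `b_{s,a,o}` with weights
`b(s) Pr(o|s,a) / Pr(o|b,a)`. -/
theorem exists_isWeight_post (b₀ b : Belief S) {a : A} {o : O} (h : 0 < M.bprO b a o) :
    ∃ w, M.IsWeight b₀ (M.post b a o h) w := by
  let w : M.OSIdx → ℝ
    | none => 0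
    | some x => if x.1.2 = (a, o) then b.val x.1.1 * M.prO x.1.1 a o / M.bprO b a o else 0
  refine ⟨w, ?_, fun s' => ?_⟩
  · rintro (_ | x)
    · exact le_rfl
    · have := mul_nonneg (b.nonneg x.1.1) (M.prO_nonneg x.1.1 a o)
      dsimp only [w]
      split_ifs <;> positivity
  · let e : {s // 0 < M.prO s a o} → M.OSIdx := fun s => some ⟨(s.1, a, o), s.2⟩
    have he : Function.Injective e := fun s t hst => by
      simpa [e, Subtype.ext_iff] using hst
    calc ∑ i, w i * (M.member b₀ i).val s'
        = ∑ s : {s // 0 < M.prO s a o}, b.val s * M.prSO s a s' o / M.bprO b a o := by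
          refine (Fintype.sum_of_injective e he _ _ ?_ fun s => ?_).symm
          · rintro (_ | ⟨⟨s, a', o'⟩, hx⟩) hi
            · simp [w]
            · have : (a', o') ≠ (a, o) := by rintro ⟨⟩; exact hi ⟨⟨s, hx⟩, rfl⟩
              simp [w, this]
          · simp [w, e, member, ← M.prO_mul_osb_val s.2 s']
            ring
      _ = ∑ s, b.val s * M.prSO s a s' o / M.bprO b a o :=
          Fintype.sum_of_injective Subtype.val Subtype.val_injective _ _
            (fun s hs => by simp [M.prSO_eq_zero_of_not_pos fun h => hs ⟨⟨s, h⟩, rfl⟩]) fun _ => rfl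
      _ = (M.post b a o h).val s' := by simp [post, bprSO, Finset.sum_div]

/-- `inf_{w ∈ W_{B_SAO,b}} ∑_{b'} w(b') Q(b',a)`, the infimum inside `H_OTIB`. -/
noncomputable def weightedInf (b₀ : Belief S) (Q : Belief S → A → ℝ) (b : Belief S) (a : A) : ℝ :=
  ⨅ w : {w : M.OSIdx → ℝ // M.IsWeight b₀ b w}, ∑ i, (w : M.OSIdx → ℝ) i * Q (M.member b₀ i) a

theorem sub_le_weightedInf {b₀ b : Belief S} (hb : ∃ w, M.IsWeight b₀ b w)
    {QP QO : Belief S → A → ℝ} (hQP : ConvexInBelief QP) {c : ℝ}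
    (hc : ∀ b a, QP b a - QO b a ≤ c) (a : A) :
    QP b a - c ≤ M.weightedInf b₀ QO b a := by
  obtain ⟨w₀, hw₀⟩ := hb
  have : Nonempty {w // M.IsWeight b₀ b w} := ⟨⟨w₀, hw₀⟩⟩
  refine le_ciInf fun ⟨w, hw_nonneg, hw⟩ => ?_
  calc QP b a - c ≤ ∑ i, w i * QP (M.member b₀ i) a - (∑ i, w i) * c := by
        rw [Belief.sum_weights_eq_one hw, one_mul]
        linarith [hQP.le_sum_mul _ hw_nonneg hw a]
    _ = ∑ i, w i * (QP (M.member b₀ i) a - c) := by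
        simp only [mul_sub, Finset.sum_sub_distrib, Finset.sum_mul]
    _ ≤ ∑ i, w i * QO (M.member b₀ i) a :=
        Finset.sum_le_sum fun i _ =>
          mul_le_mul_of_nonneg_left (by linarith [hc (M.member b₀ i) a]) (hw_nonneg i)

theorem HPOMDP_le_HOTIB_add (b₀ : Belief S) {QP QO : Belief S → A → ℝ}
    (hQP : ConvexInBelief QP) {c : ℝ} (hc : ∀ b a, QP b a - QO b a ≤ c) (b : Belief S) (a : A) :
    M.HPOMDP QP b a ≤ M.HOTIB b₀ QO b a + M.γ * c := by
  have hterm : ∀ o, (if h : 0 < M.bprO b a o then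
      M.bprO b a o * Finset.univ.sup' Finset.univ_nonempty (fun a' => QP (M.post b a o h) a')
      else 0) ≤ (if h : 0 < M.bprO b a o then
      Finset.univ.sup' Finset.univ_nonempty
        (fun a' => M.bprO b a o * M.weightedInf b₀ QO (M.post b a o h) a')
      else 0) + M.bprO b a o * c := by
    intro o
    split_ifs with h
    · obtain ⟨a', -, ha'⟩ := Finset.exists_mem_eq_sup' Finset.univ_nonempty
        fun a' => QP (M.post b a o h) a'
      have hle := M.sub_le_weightedInf (M.exists_isWeight_post b₀ b h) hQP hc a'
      rw [ha']
      calc M.bprO b a o * QP (M.post b a o h) a'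
          ≤ M.bprO b a o * M.weightedInf b₀ QO (M.post b a o h) a' + M.bprO b a o * c := by
            rw [← mul_add]; gcongr; linarith
        _ ≤ _ := by
            gcongr
            exact Finset.le_sup' (fun a' => M.bprO b a o * M.weightedInf b₀ QO (M.post b a o h) a')
              (Finset.mem_univ a')
    · simp [le_antisymm (not_lt.1 h) (M.bprO_nonneg b a o)]
  have hsum := Finset.sum_le_sum fun o (_ : o ∈ Finset.univ) => hterm o
  rw [Finset.sum_add_distrib, ← Finset.sum_mul, M.sum_bprO, one_mul] at hsum
  have := mul_le_mul_of_nonneg_left hsum M.γ_pos.le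
  rw [HPOMDP, HOTIB]
  unfold weightedInf at this
  linarith

end POMDP

/-- Soundness of the optimized tighter informed bound: if `Q_P` is a bounded convex fixed
point of `H_POMDP` and `Q_O` a bounded fixed point of `H_OTIB`, then `Q_P ≤ Q_O`. -/
theorem QPOMDP_le_QOTIB {S A O : Type*} [Fintype S] [Fintype A] [Fintype O]
    [Nonempty S] [Nonempty A] [Nonempty O] (M : POMDP S A O) (b₀ : Belief S)
    (QP QO : Belief S → A → ℝ)
    (hQPbdd : ∃ C : ℝ, ∀ b a, |QP b a| ≤ C) (hQPconv : ConvexInBelief QP)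
    (hQP : ∀ b a, QP b a = M.HPOMDP QP b a)
    (hQObdd : ∃ C : ℝ, ∀ b a, |QO b a| ≤ C)
    (hQO : ∀ b a, QO b a = M.HOTIB b₀ QO b a)
    (b : Belief S) (a : A) :
    QP b a ≤ QO b a := by
  obtain ⟨CP, hCP⟩ := hQPbdd
  obtain ⟨CO, hCO⟩ := hQObdd
  let D : Belief S × A → ℝ := fun x => QP x.1 x.2 - QO x.1 x.2
  have hbdd : BddAbove (Set.range D) := ⟨CP + CO, by
    rintro _ ⟨⟨b, a⟩, rfl⟩
    linarith [le_abs_self (QP b a), neg_abs_le (QO b a), hCP b a, hCO b a]⟩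
  have hstep (c : ℝ) (hc : ∀ x, D x ≤ c) (x : Belief S × A) : D x ≤ M.γ * c := by
    have := M.HPOMDP_le_HOTIB_add b₀ hQPconv (fun b a => hc (b, a)) x.1 x.2
    simp only [D]
    rw [hQP, hQO]
    linarith
  linarith [nonpos_of_bddAbove_of_contracting M.γ_pos.le M.γ_lt_one hbdd hstep (b, a)]
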